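/- arXiv:1707.01172 — 2 statements merged into one kernel-verified Lean document; each statement's English description precedes it below -/
import Mathlib

section
/- For weak compositions of length 2, A_{(0,1)} = M_{(0,1)} − M_{(1,0)}, i.e., x_2 = (x_1 + x_2) − x_1; hence the Demazure atom A_{(0,1)} = x_2 does not expand positively in the monomial slide basis. -/
/-
`M_b` contains `x^e`, with coefficient one, exactly when `e` dominates `b` and has the same
flattening. The compositions of length two flattening to `(1)` are `(0,1)` and `(1,0)`; the
second dominates the first but not conversely. So `M_{(0,1)} = x₁ + x₂` and `M_{(1,0)} = x₁`,
and comparing the coefficients of `x₂` and `x₁` in an expansion `x₂ = ∑ c_b M_b` gives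
`c_{(0,1)} = 1` and `c_{(0,1)} + c_{(1,0)} = 0`, so `c_{(1,0)} = -1`.
-/

open MvPolynomial
open scoped Classical

noncomputable section

/-- Partial sum of the first `k` entries of a weak composition. -/
def psum {n : ℕ} (a : Fin n → ℕ) (k : ℕ) : ℕ :=
  ∑ i ∈ Finset.univ.filter (fun i : Fin n => (i : ℕ) < k), a i

/-- Dominance order: `Dom a b` means `b ≥ a`, i.e. every partial sum of `b`
is at least the corresponding partial sum of `a`. -/
def Dom {n : ℕ} (a b : Fin n → ℕ) : Prop := ∀ k : ℕ, psum a k ≤ psum b k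

/-- `flat a`: the list of nonzero entries of `a`, in order. -/
def flat {n : ℕ} (a : Fin n → ℕ) : List ℕ := (List.ofFn a).filter (· ≠ 0)

/-- The monomial `x^b`. -/
def mono {n : ℕ} (b : Fin n → ℕ) : MvPolynomial (Fin n) ℤ := ∏ i, X i ^ b i

/-- Finite set of weak compositions of length `n` with all entries `≤ N`. -/
def box (n N : ℕ) : Finset (Fin n → ℕ) := Fintype.piFinset fun _ => Finset.range (N + 1)

/-- A single slide move relative to the base composition `a`: a local move
`(…,0,k,…) → (…,i,j,…)` with `i + j = k`.  When `fixed = true` we additionally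
require `j > 0` whenever `k` occupies a position that is nonzero in `a`. -/
def SlideMove {n : ℕ} (a : Fin n → ℕ) (fixed : Bool) (b c : Fin n → ℕ) : Prop :=
  ∃ (p : ℕ) (hp : p + 1 < n) (i j : ℕ),
    b ⟨p, Nat.lt_of_succ_lt hp⟩ = 0 ∧
    i + j = b ⟨p + 1, hp⟩ ∧
    (fixed = true → a ⟨p + 1, hp⟩ ≠ 0 → 0 < j) ∧
    c = Function.update (Function.update b ⟨p, Nat.lt_of_succ_lt hp⟩ i) ⟨p + 1, hp⟩ j

/-- `b` is a slide of `a`. -/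
def Slides {n : ℕ} (a b : Fin n → ℕ) : Prop :=
  Relation.ReflTransGen (SlideMove a false) a b

/-- `b` is a fixed slide of `a`. -/
def FixSlides {n : ℕ} (a b : Fin n → ℕ) : Prop :=
  Relation.ReflTransGen (SlideMove a true) a b

/-- The monomial slide polynomial `M_a`. -/
def Mslide {n : ℕ} (a : Fin n → ℕ) : MvPolynomial (Fin n) ℤ :=
  ∑ b ∈ (box n (∑ i, a i)).filter (fun b => Dom a b ∧ flat b = flat a), mono b

/-- The fundamental slide polynomial `F_a`, as the generating function of slides. -/
def Fslide {n : ℕ} (a : Fin n → ℕ) : MvPolynomial (Fin n) ℤ :=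
  ∑ b ∈ (box n (∑ i, a i)).filter (fun b => Slides a b), mono b

/-- The fundamental particle polynomial `L_a`, the generating function of fixed slides. -/
def Lpart {n : ℕ} (a : Fin n → ℕ) : MvPolynomial (Fin n) ℤ :=
  ∑ b ∈ (box n (∑ i, a i)).filter (fun b => FixSlides a b), mono b

/-- A left swap: exchange entries `b i ≤ b j` with `i < j`. -/
def LSwap {n : ℕ} (b c : Fin n → ℕ) : Prop :=
  ∃ i j : Fin n, i < j ∧ b i ≤ b j ∧
    c = Function.update (Function.update b i (b j)) j (b i)

lemma mono_eq_monomial {n : ℕ} (d : Fin n → ℕ) :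
    mono d = monomial (Finsupp.equivFunOnFinite.symm d) 1 := by
  rw [monomial_eq, C_1, one_mul, Finsupp.prod_pow]
  rfl

lemma coeff_mono {n : ℕ} (d e : Fin n → ℕ) :
    coeff (Finsupp.equivFunOnFinite.symm e) (mono d) = if d = e then 1 else 0 := by
  simp [mono_eq_monomial, coeff_monomial]

lemma List.sum_filter_ne_zero {M : Type*} [AddMonoid M] [DecidableEq M] (l : List M) :
    (l.filter (· ≠ 0)).sum = l.sum := by
  induction l with
  | nil => rfl
  | cons x l ih => by_cases hx : x = 0 <;> simp_all

lemma sum_flat {n : ℕ} (a : Fin n → ℕ) : (flat a).sum = ∑ i, a i := by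
  rw [flat, List.sum_filter_ne_zero, List.sum_ofFn]

-- So the box cut-off in `Mslide` excludes nothing.
lemma mem_box_of_flat_eq {n : ℕ} {a b : Fin n → ℕ} (h : flat b = flat a) :
    b ∈ box n (∑ i, a i) := by
  refine Fintype.mem_piFinset.2 fun i => Finset.mem_range_succ_iff.2 ?_
  rw [← sum_flat, ← h, sum_flat]
  exact Finset.single_le_sum (fun _ _ => Nat.zero_le _) (Finset.mem_univ i)

lemma Mslide_eq_sum {n : ℕ} {a : Fin n → ℕ} (s : Finset (Fin n → ℕ))
    (hs : ∀ b, Dom a b ∧ flat b = flat a ↔ b ∈ s) : Mslide a = ∑ b ∈ s, mono b := by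
  rw [Mslide]
  congr 1
  ext b
  rw [Finset.mem_filter, ← hs]
  exact ⟨And.right, fun h => ⟨mem_box_of_flat_eq h.2, h⟩⟩

lemma coeff_Mslide {n : ℕ} (a e : Fin n → ℕ) :
    coeff (Finsupp.equivFunOnFinite.symm e) (Mslide a) =
      if Dom a e ∧ flat e = flat a then 1 else 0 := by
  simp only [Mslide, coeff_sum, coeff_mono, Finset.sum_ite_eq', Finset.mem_filter]
  exact if_congr ⟨And.right, fun h => ⟨mem_box_of_flat_eq h.2, h⟩⟩ rfl rfl

lemma coeff_sum_smul_Mslide {n : ℕ} (c : (Fin n → ℕ) →₀ ℤ) {e : Fin n → ℕ}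
    (s : Finset (Fin n → ℕ)) (hs : ∀ b, Dom b e ∧ flat e = flat b ↔ b ∈ s) :
    coeff (Finsupp.equivFunOnFinite.symm e) (∑ b ∈ c.support, c b • Mslide b) =
      ∑ b ∈ s, c b := by
  simp only [coeff_sum, coeff_smul, coeff_Mslide, hs, smul_eq_mul, mul_ite, mul_one, mul_zero,
    Finset.sum_ite_mem]
  refine Finset.sum_subset Finset.inter_subset_right fun b _ hb => ?_
  simpa [Finset.mem_inter, and_iff_left ‹b ∈ s›] using hb

lemma Dom.refl {n : ℕ} (a : Fin n → ℕ) : Dom a a := fun _ => le_rfl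

lemma psum_two (b : Fin 2 → ℕ) (k : ℕ) :
    psum b k = (if 0 < k then b 0 else 0) + (if 1 < k then b 1 else 0) := by
  simp [_root_.psum, Finset.sum_filter, Fin.sum_univ_two]

lemma dom_01_10 : Dom ![0, 1] ![1, 0] := by
  intro k
  rw [psum_two, psum_two]
  simp only [Matrix.cons_val_zero, Matrix.cons_val_one, Matrix.cons_val_fin_one]
  split_ifs <;> omega

lemma not_dom_10_01 : ¬ Dom ![1, 0] ![0, 1] := by
  intro h
  simpa [psum_two] using h 1

lemma flat_eq_one_iff (b : Fin 2 → ℕ) : flat b = [1] ↔ b = ![0, 1] ∨ b = ![1, 0] := by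
  have hb : b = ![b 0, b 1] := by ext i; fin_cases i <;> rfl
  rw [hb, flat]
  by_cases h0 : b 0 = 0 <;> by_cases h1 : b 1 = 0 <;> simp [h0, h1, List.ofFn_succ]

lemma flat_01 : flat ![0, 1] = [1] := (flat_eq_one_iff _).2 (.inl rfl)

lemma flat_10 : flat ![1, 0] = [1] := (flat_eq_one_iff _).2 (.inr rfl)

lemma X_one_eq_mono : (X 1 : MvPolynomial (Fin 2) ℤ) = mono ![0, 1] := by
  simp [mono, Fin.prod_univ_two]

lemma X_zero_eq_mono : (X 0 : MvPolynomial (Fin 2) ℤ) = mono ![1, 0] := by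
  simp [mono, Fin.prod_univ_two]

lemma Mslide_01 : Mslide ![0, 1] = X 0 + X 1 := by
  rw [Mslide_eq_sum {![0, 1], ![1, 0]}, Finset.sum_pair (by decide), X_one_eq_mono, X_zero_eq_mono,
    add_comm]
  intro b
  rw [flat_01, flat_eq_one_iff, Finset.mem_insert, Finset.mem_singleton]
  refine ⟨And.right, ?_⟩
  rintro (rfl | rfl)
  exacts [⟨Dom.refl _, .inl rfl⟩, ⟨dom_01_10, .inr rfl⟩]

lemma Mslide_10 : Mslide ![1, 0] = X 0 := by
  rw [Mslide_eq_sum {![1, 0]}, Finset.sum_singleton, X_zero_eq_mono]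
  intro b
  rw [flat_10, flat_eq_one_iff, Finset.mem_singleton]
  constructor
  · rintro ⟨hd, rfl | rfl⟩
    exacts [absurd hd not_dom_10_01, rfl]
  · rintro rfl
    exact ⟨Dom.refl _, .inr rfl⟩

lemma dom_01_and_flat_iff (b : Fin 2 → ℕ) :
    Dom b ![0, 1] ∧ flat ![0, 1] = flat b ↔ b ∈ ({![0, 1]} : Finset _) := by
  rw [flat_01, eq_comm, flat_eq_one_iff, Finset.mem_singleton]
  constructor
  · rintro ⟨hd, rfl | rfl⟩
    exacts [rfl, absurd hd not_dom_10_01]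
  · rintro rfl
    exact ⟨Dom.refl _, .inl rfl⟩

lemma dom_10_and_flat_iff (b : Fin 2 → ℕ) :
    Dom b ![1, 0] ∧ flat ![1, 0] = flat b ↔ b ∈ ({![0, 1], ![1, 0]} : Finset _) := by
  rw [flat_10, eq_comm, flat_eq_one_iff, Finset.mem_insert, Finset.mem_singleton]
  refine ⟨And.right, ?_⟩
  rintro (rfl | rfl)
  exacts [⟨dom_01_10, .inl rfl⟩, ⟨Dom.refl _, .inr rfl⟩]

/-- the Demazure atom `A_{(0,1)} = x₂` satisfies
`A_{(0,1)} = M_{(0,1)} - M_{(1,0)}`, i.e. `x₂ = (x₁ + x₂) - x₁`; hence any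
expansion of `A_{(0,1)}` in the monomial slide basis has a negative coefficient. -/
theorem atom01_not_monomial_slide_positive :
    (X 1 : MvPolynomial (Fin 2) ℤ) = Mslide ![0, 1] - Mslide ![1, 0] ∧
    Mslide ![0, 1] = X 0 + X 1 ∧ Mslide ![1, 0] = X 0 ∧
    ∀ c : (Fin 2 → ℕ) →₀ ℤ,
      (X 1 : MvPolynomial (Fin 2) ℤ) = ∑ b ∈ c.support, c b • Mslide b → ∃ b, c b < 0 := by
  refine ⟨by rw [Mslide_01, Mslide_10]; ring, Mslide_01, Mslide_10, fun c hc => ⟨![1, 0], ?_⟩⟩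
  have h01 : 1 = c ![0, 1] := by
    have := congrArg (coeff (Finsupp.equivFunOnFinite.symm ![0, 1])) hc
    rwa [coeff_sum_smul_Mslide c _ dom_01_and_flat_iff, Finset.sum_singleton, X_one_eq_mono,
      coeff_mono, if_pos rfl] at this
  have h10 : 0 = c ![0, 1] + c ![1, 0] := by
    have := congrArg (coeff (Finsupp.equivFunOnFinite.symm ![1, 0])) hc
    rwa [coeff_sum_smul_Mslide c _ dom_10_and_flat_iff, Finset.sum_pair (by decide), X_one_eq_mono,
      coeff_mono, if_neg (by decide)] at this
  omega

end
end

section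
/- The fundamental slide polynomial expands as F_a = Σ L_b, where the sum is over weak compositions b ≥ a with flat(b) = flat(a), and L_b is the fundamental particle polynomial (the generating function of fixed slides of b). Moreover, each slide f of a is a fixed slide of exactly one such b. -/
/-!
The fixed slides of `b` are exactly the `f` with the same total in which every nonzero entry
`b q` is split over positions `≤ q`, leaving a nonzero piece at `q` (`FixSlidesSpec`); given
`flat b`, such an `f` determines `b`. Along a slide path from `a` one carries a base of this
kind: a move is either a fixed move of the current base, or it empties a position where the base
is nonzero, and then that base entry slides along with it, which keeps the base dominating `a`
with the same flat. Conversely every `b ≥ a` with `flat b = flat a` is a slide of `a` (move the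
first entry of `a` that is out of place one step left, repeatedly). So the fixed slides of these
`b` partition the slides of `a`, and summing monomials gives the expansion.
-/

open MvPolynomial
open scoped Classical

noncomputable section

section Psum

variable {n : ℕ}

theorem psum_succ (g : Fin n → ℕ) (q : Fin n) : psum g (q + 1) = psum g q + g q := by
  have h : Finset.univ.filter (fun i : Fin n => (i : ℕ) < q + 1)
      = insert q (Finset.univ.filter fun i : Fin n => (i : ℕ) < q) := by
    ext i
    simp only [Finset.mem_filter, Finset.mem_univ, true_and, Finset.mem_insert, Fin.ext_iff]
    omega
  rw [_root_.psum, h, Finset.sum_insert (by simp), add_comm, _root_.psum]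

theorem psum_of_le (g : Fin n → ℕ) {k : ℕ} (hk : n ≤ k) : psum g k = ∑ i, g i := by
  rw [_root_.psum, Finset.filter_true_of_mem fun i _ => lt_of_lt_of_le i.isLt hk]

theorem psum_mono (g : Fin n → ℕ) : Monotone (psum g) := fun _ _ hkl =>
  Finset.sum_le_sum_of_subset (Finset.monotone_filter_right _ fun _ _ hi => lt_of_lt_of_le hi hkl)

theorem psum_congr {g h : Fin n → ℕ} {t : ℕ} (hgh : ∀ k : Fin n, (k : ℕ) < t → g k = h k) :
    psum g t = psum h t :=
  Finset.sum_congr rfl fun k hk => hgh k (Finset.mem_filter.1 hk).2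

theorem psum_eq_of_eq_zero (g : Fin n → ℕ) {t s : ℕ} (hts : t ≤ s)
    (hzero : ∀ k : Fin n, t ≤ k → (k : ℕ) < s → g k = 0) : psum g s = psum g t := by
  refine (Finset.sum_subset (Finset.monotone_filter_right _ fun _ _ hi => lt_of_lt_of_le hi hts)
    fun k hks hkt => hzero k ?_ ?_).symm
  · simpa using hkt
  · simpa using hks

theorem psum_update (g : Fin n → ℕ) (r : Fin n) (x m : ℕ) :
    psum (Function.update g r x) m + (if (r : ℕ) < m then g r else 0)
      = psum g m + if (r : ℕ) < m then x else 0 := by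
  unfold _root_.psum
  by_cases hr : (r : ℕ) < m
  · have hmem : r ∈ Finset.univ.filter fun i : Fin n => (i : ℕ) < m := by simpa using hr
    rw [Finset.sum_update_of_mem hmem, Finset.sum_eq_add_sum_sdiff_singleton_of_mem hmem g,
      if_pos hr, if_pos hr]
    ring
  · rw [Finset.sum_update_of_notMem (by simpa using hr), if_neg hr, if_neg hr]

theorem eq_of_psum_eq {g h : Fin n → ℕ} (hgh : ∀ m, psum g m = psum h m) : g = h := by
  funext q
  have := hgh (q + 1)
  rwa [psum_succ, psum_succ, hgh, Nat.add_left_cancel_iff] at this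

end Psum

section Move

variable {n : ℕ}

def moveAt (b : Fin n → ℕ) {p : ℕ} (hp : p + 1 < n) (i j : ℕ) : Fin n → ℕ :=
  Function.update (Function.update b ⟨p, Nat.lt_of_succ_lt hp⟩ i) ⟨p + 1, hp⟩ j

variable (b : Fin n → ℕ) {p : ℕ} (hp : p + 1 < n) (i j : ℕ)

theorem moveAt_apply_left : moveAt b hp i j ⟨p, Nat.lt_of_succ_lt hp⟩ = i := by
  simp [moveAt]

theorem moveAt_apply_right : moveAt b hp i j ⟨p + 1, hp⟩ = j := by
  simp [moveAt]

theorem moveAt_apply_of_ne {r : Fin n} (hr : (r : ℕ) ≠ p) (hr' : (r : ℕ) ≠ p + 1) :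
    moveAt b hp i j r = b r := by
  simp [moveAt, Fin.ext_iff, hr, hr']

theorem moveAt_moveAt (i' j' : ℕ) : moveAt (moveAt b hp i j) hp i' j' = moveAt b hp i' j' := by
  have hne : (⟨p, Nat.lt_of_succ_lt hp⟩ : Fin n) ≠ ⟨p + 1, hp⟩ := by simp
  simp only [moveAt]
  rw [Function.update_comm hne, Function.update_idem, Function.update_comm hne.symm,
    Function.update_idem]

theorem moveAt_self : moveAt b hp (b ⟨p, Nat.lt_of_succ_lt hp⟩) (b ⟨p + 1, hp⟩) = b := by
  simp [moveAt]

variable {b i j}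

theorem psum_moveAt (h0 : b ⟨p, Nat.lt_of_succ_lt hp⟩ = 0) (hij : i + j = b ⟨p + 1, hp⟩)
    (m : ℕ) : psum (moveAt b hp i j) m = psum b m + if m = p + 1 then i else 0 := by
  have h1 := psum_update (Function.update b ⟨p, Nat.lt_of_succ_lt hp⟩ i) ⟨p + 1, hp⟩ j m
  have h2 := psum_update b ⟨p, Nat.lt_of_succ_lt hp⟩ i m
  simp only [Function.update_of_ne (show (⟨p + 1, hp⟩ : Fin n) ≠ ⟨p, Nat.lt_of_succ_lt hp⟩ by simp),
    h0] at h1 h2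
  rw [moveAt]
  split_ifs at h1 h2 ⊢ <;> omega

theorem sum_moveAt (h0 : b ⟨p, Nat.lt_of_succ_lt hp⟩ = 0) (hij : i + j = b ⟨p + 1, hp⟩) :
    ∑ r, moveAt b hp i j r = ∑ r, b r := by
  rw [← psum_of_le _ le_rfl, psum_moveAt hp h0 hij, if_neg (by omega), add_zero,
    psum_of_le _ le_rfl]

end Move

section Weight

variable {n : ℕ}

def sumPsum (g : Fin n → ℕ) : ℕ := ∑ m ∈ Finset.range (n + 1), psum g m

theorem sumPsum_le_of_dom {a b : Fin n → ℕ} (h : Dom a b) : sumPsum a ≤ sumPsum b :=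
  Finset.sum_le_sum fun m _ => h m

theorem sumPsum_moveAt {b : Fin n → ℕ} {p : ℕ} (hp : p + 1 < n) {i j : ℕ}
    (h0 : b ⟨p, Nat.lt_of_succ_lt hp⟩ = 0) (hij : i + j = b ⟨p + 1, hp⟩) :
    sumPsum (moveAt b hp i j) = sumPsum b + i := by
  rw [sumPsum, Finset.sum_congr rfl fun m _ => psum_moveAt hp h0 hij m, Finset.sum_add_distrib,
    Finset.sum_ite_eq', if_pos (Finset.mem_range.2 (by omega)), sumPsum]

end Weight

section Slides

variable {n : ℕ} {a b c : Fin n → ℕ}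

theorem slideMove_false_eq (a c : Fin n → ℕ) : SlideMove a false = SlideMove c false := by
  funext x y
  simp [SlideMove]

theorem Slides.head (h : SlideMove a false a b) (h' : Slides b c) : Slides a c := by
  rw [Slides, slideMove_false_eq b a] at h'
  exact Relation.ReflTransGen.head h h'

theorem Slides.trans (h : Slides a b) (h' : Slides b c) : Slides a c := by
  rw [Slides, slideMove_false_eq b a] at h'
  exact Relation.ReflTransGen.trans h h'

theorem FixSlides.slides (h : FixSlides a b) : Slides a b :=
  Relation.ReflTransGen.mono (fun _ _ ⟨p, hp, i, j, h0, hij, _, hc⟩ =>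
    ⟨p, hp, i, j, h0, hij, nofun, hc⟩) _ _ h

theorem Slides.sum_eq (h : Slides a b) : ∑ i, b i = ∑ i, a i := by
  induction h with
  | refl => rfl
  | tail _ hmove ih =>
    obtain ⟨p, hp, i, j, h0, hij, -, rfl⟩ := hmove
    exact (sum_moveAt hp h0 hij).trans ih

end Slides

section Flat

variable {n : ℕ}

def flatFrom (g : Fin n → ℕ) (t : ℕ) : List ℕ := ((List.ofFn g).drop t).filter (· ≠ 0)

theorem flatFrom_of_le (g : Fin n → ℕ) {t : ℕ} (ht : n ≤ t) : flatFrom g t = [] := by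
  rw [flatFrom, List.drop_eq_nil_of_le (by simpa using ht), List.filter_nil]

theorem flatFrom_eq_ite (g : Fin n → ℕ) (t : Fin n) :
    flatFrom g t =
      if g t = 0 then flatFrom g ((t : ℕ) + 1) else g t :: flatFrom g ((t : ℕ) + 1) := by
  rw [flatFrom, List.drop_eq_getElem_cons (by simp), List.filter_cons]
  simp [flatFrom]

theorem flatFrom_congr {g h : Fin n → ℕ} {t : ℕ} (hgh : ∀ k : Fin n, t ≤ k → g k = h k) :
    flatFrom g t = flatFrom h t := by
  rw [flatFrom, flatFrom]
  congr 1
  refine List.ext_getElem (by simp) fun k _ _ => ?_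
  simp only [List.getElem_drop, List.getElem_ofFn]
  exact hgh _ (by simp)

theorem flat_eq_filter_take_append (g : Fin n → ℕ) (t : ℕ) :
    flat g = ((List.ofFn g).take t).filter (· ≠ 0) ++ flatFrom g t := by
  rw [flatFrom, ← List.filter_append, List.take_append_drop, flat]

theorem flat_eq_flat_iff_flatFrom_eq {g h : Fin n → ℕ} {t : ℕ}
    (hgh : ∀ k : Fin n, (k : ℕ) < t → g k = h k) :
    flat g = flat h ↔ flatFrom g t = flatFrom h t := by
  have htake : (List.ofFn g).take t = (List.ofFn h).take t := by
    refine List.ext_getElem (by simp) fun k hk _ => ?_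
    simp only [List.getElem_take, List.getElem_ofFn]
    exact hgh _ (by simp only [List.length_take, List.length_ofFn, lt_min_iff] at hk; exact hk.1)
  rw [flat_eq_filter_take_append g t, flat_eq_filter_take_append h t, htake, List.append_right_inj]

theorem exists_of_flatFrom_eq_cons {g : Fin n → ℕ} {x : ℕ} {l : List ℕ} {t : ℕ}
    (h : flatFrom g t = x :: l) :
    ∃ s : Fin n, t ≤ s ∧ (∀ k : Fin n, t ≤ k → k < s → g k = 0) ∧ g s = x := by
  by_cases ht : t < n
  swap
  · simp [flatFrom_of_le g (not_lt.1 ht)] at h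
  rw [flatFrom_eq_ite g ⟨t, ht⟩] at h
  split_ifs at h with hzero
  · obtain ⟨s, hts, hz, hs⟩ := exists_of_flatFrom_eq_cons h
    refine ⟨s, Nat.le_of_succ_le hts, fun k hk hks => ?_, hs⟩
    rcases hk.eq_or_lt with hk | hk
    · rwa [show k = ⟨t, ht⟩ from Fin.ext hk.symm]
    · exact hz k hk hks
  · exact ⟨⟨t, ht⟩, le_rfl, fun k hk hks => absurd hks (by simp [Fin.lt_def]; omega),
      (List.cons.inj h).1⟩
termination_by n - t

theorem exists_eq_of_flat_eq {g h : Fin n → ℕ} (hflat : flat g = flat h) {t : Fin n}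
    (hgh : ∀ k < t, g k = h k) (ht : h t ≠ 0) :
    ∃ s, t ≤ s ∧ (∀ k, t ≤ k → k < s → g k = 0) ∧ g s = h t := by
  have hfrom := (flat_eq_flat_iff_flatFrom_eq hgh).1 hflat
  rw [flatFrom_eq_ite h t, if_neg ht] at hfrom
  exact exists_of_flatFrom_eq_cons hfrom

theorem flat_moveAt {b : Fin n → ℕ} {p : ℕ} (hp : p + 1 < n)
    (h0 : b ⟨p, Nat.lt_of_succ_lt hp⟩ = 0) : flat (moveAt b hp (b ⟨p + 1, hp⟩) 0) = flat b := by
  rw [flat_eq_flat_iff_flatFrom_eq (t := p) fun k hk =>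
    moveAt_apply_of_ne _ _ _ _ (by omega) (by omega)]
  have hrest : flatFrom (moveAt b hp (b ⟨p + 1, hp⟩) 0) (p + 2) = flatFrom b (p + 2) :=
    flatFrom_congr fun k hk => moveAt_apply_of_ne _ _ _ _ (by omega) (by omega)
  have h1 := flatFrom_eq_ite (moveAt b hp (b ⟨p + 1, hp⟩) 0) ⟨p, Nat.lt_of_succ_lt hp⟩
  have h2 := flatFrom_eq_ite (moveAt b hp (b ⟨p + 1, hp⟩) 0) ⟨p + 1, hp⟩
  have h3 := flatFrom_eq_ite b ⟨p, Nat.lt_of_succ_lt hp⟩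
  have h4 := flatFrom_eq_ite b ⟨p + 1, hp⟩
  simp only [moveAt_apply_left, moveAt_apply_right, h0, if_true] at h1 h2 h3 h4
  rw [h1, h2, h3, h4, hrest]

end Flat

section FixSlidesSpec

variable {n : ℕ} {b b' f x : Fin n → ℕ}

/-- Each nonzero entry `b q` is split over positions `≤ q`, with a nonzero piece left at `q`. -/
def FixSlidesSpec (b f : Fin n → ℕ) : Prop :=
  ∑ i, f i = ∑ i, b i ∧ ∀ q : Fin n, b q ≠ 0 → f q ≠ 0 ∧ psum f (q + 1) = psum b (q + 1)

theorem FixSlidesSpec.refl (b : Fin n → ℕ) : FixSlidesSpec b b := ⟨rfl, fun _ hq => ⟨hq, rfl⟩⟩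

theorem FixSlidesSpec.eq_zero_of_eq_zero (h : FixSlidesSpec b f) {q : Fin n} (hq : f q = 0) :
    b q = 0 := by
  by_contra hb
  exact (h.2 q hb).1 hq

theorem fixSlidesSpec_moveAt_iff {p : ℕ} (hp : p + 1 < n) {i j : ℕ}
    (hbP : b ⟨p, Nat.lt_of_succ_lt hp⟩ = 0) (hxP : x ⟨p, Nat.lt_of_succ_lt hp⟩ = 0)
    (hij : i + j = x ⟨p + 1, hp⟩) (hj : b ⟨p + 1, hp⟩ ≠ 0 → (j ≠ 0 ↔ x ⟨p + 1, hp⟩ ≠ 0)) :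
    FixSlidesSpec b (moveAt x hp i j) ↔ FixSlidesSpec b x := by
  unfold FixSlidesSpec
  rw [sum_moveAt hp hxP hij]
  refine and_congr_right fun _ => forall_congr' fun q => imp_congr_right fun hq => ?_
  have hqP : (q : ℕ) ≠ p := fun hqp => hq (by rwa [show q = ⟨p, _⟩ from Fin.ext hqp])
  rw [psum_moveAt hp hxP hij, if_neg (by omega), add_zero]
  refine and_congr_left fun _ => ?_
  by_cases hqQ : (q : ℕ) = p + 1
  · obtain rfl : q = ⟨p + 1, hp⟩ := Fin.ext hqQ
    rw [moveAt_apply_right]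
    exact hj hq
  · rw [moveAt_apply_of_ne _ _ _ _ hqP hqQ]

theorem FixSlidesSpec.eq_of_vanish (h : FixSlidesSpec b f)
    (hvan : ∀ q : Fin n, (q : ℕ) + 1 < n → b q = 0 → f q = 0) : f = b := by
  refine eq_of_psum_eq fun m => ?_
  induction m with
  | zero => simp [_root_.psum]
  | succ m ih =>
    by_cases hm : m + 1 < n
    · by_cases hb : b ⟨m, by omega⟩ = 0
      · rw [psum_succ f ⟨m, by omega⟩, psum_succ b ⟨m, by omega⟩, hb, hvan _ hm hb, ih]
      · exact (h.2 _ hb).2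
    · rw [psum_of_le f (by omega), psum_of_le b (by omega), h.1]

theorem FixSlidesSpec.moveAt_zero (h : FixSlidesSpec b x) {p : ℕ} (hp : p + 1 < n)
    (hxP : x ⟨p, Nat.lt_of_succ_lt hp⟩ = 0) :
    FixSlidesSpec (moveAt b hp (b ⟨p + 1, hp⟩) 0) (moveAt x hp (x ⟨p + 1, hp⟩) 0) := by
  have hbP := h.eq_zero_of_eq_zero hxP
  refine ⟨by rw [sum_moveAt hp hxP (add_zero _), sum_moveAt hp hbP (add_zero _), h.1],
    fun q hq => ?_⟩
  rw [psum_moveAt hp hxP (add_zero _), psum_moveAt hp hbP (add_zero _)]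
  by_cases hqQ : (q : ℕ) = p + 1
  · obtain rfl : q = ⟨p + 1, hp⟩ := Fin.ext hqQ
    exact absurd (moveAt_apply_right ..) hq
  by_cases hqP : (q : ℕ) = p
  · obtain rfl : q = ⟨p, Nat.lt_of_succ_lt hp⟩ := Fin.ext hqP
    rw [moveAt_apply_left] at hq ⊢
    obtain ⟨hxQ, hpsQ⟩ := h.2 _ hq
    have hx := psum_succ x ⟨p + 1, hp⟩
    have hb := psum_succ b ⟨p + 1, hp⟩
    dsimp only at hpsQ hx hb ⊢
    rw [if_pos rfl, if_pos rfl]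
    exact ⟨hxQ, by omega⟩
  · rw [moveAt_apply_of_ne _ _ _ _ hqP hqQ] at hq ⊢
    rw [if_neg (by omega), if_neg (by omega)]
    exact h.2 q hq

theorem FixSlidesSpec.fixSlides (h : FixSlidesSpec b f) : FixSlides b f := by
  induction hw : sumPsum f using Nat.strong_induction_on generalizing f with
  | _ w ih =>
  by_cases hfb : f = b
  · exact hfb ▸ .refl
  obtain ⟨p, hp, hbP, hfP⟩ : ∃ (p : ℕ) (hp : p + 1 < n),
      b ⟨p, Nat.lt_of_succ_lt hp⟩ = 0 ∧ f ⟨p, Nat.lt_of_succ_lt hp⟩ ≠ 0 := by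
    by_contra! hvan
    exact hfb (h.eq_of_vanish fun q hq => hvan q hq)
  -- `f` arises by a fixed move from `f'`, which collects `f p + f (p + 1)` at `p + 1`
  set f' := moveAt f hp 0 (f ⟨p, Nat.lt_of_succ_lt hp⟩ + f ⟨p + 1, hp⟩)
  have hf'P : f' ⟨p, Nat.lt_of_succ_lt hp⟩ = 0 := moveAt_apply_left ..
  have hsum : f ⟨p, Nat.lt_of_succ_lt hp⟩ + f ⟨p + 1, hp⟩ = f' ⟨p + 1, hp⟩ :=
    (moveAt_apply_right ..).symm
  have hf : moveAt f' hp (f ⟨p, Nat.lt_of_succ_lt hp⟩) (f ⟨p + 1, hp⟩) = f := by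
    rw [moveAt_moveAt, moveAt_self]
  have hspec : FixSlidesSpec b f' := by
    refine (fixSlidesSpec_moveAt_iff hp hbP hf'P hsum fun hbQ => ?_).1 (by rwa [hf])
    exact iff_of_true (h.2 _ hbQ).1 (by omega)
  have hw' : sumPsum f' < w := by
    rw [← hw, ← hf, sumPsum_moveAt hp hf'P hsum]
    omega
  exact (ih _ hw' hspec rfl).tail
    ⟨p, hp, _, _, hf'P, hsum, fun _ hbQ => Nat.pos_of_ne_zero (h.2 _ hbQ).1, hf.symm⟩

theorem fixSlides_iff_spec : FixSlides b f ↔ FixSlidesSpec b f := by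
  refine ⟨fun h => ?_, FixSlidesSpec.fixSlides⟩
  induction h with
  | refl => exact .refl b
  | tail _ hmove ih =>
    obtain ⟨p, hp, i, j, hxP, hij, hj, rfl⟩ := hmove
    refine (fixSlidesSpec_moveAt_iff hp (ih.eq_zero_of_eq_zero hxP) hxP hij fun hbQ => ?_).2 ih
    have := hj rfl hbQ
    exact iff_of_true this.ne' (by omega)

theorem FixSlidesSpec.apply_eq_of_flat_eq (hflat : flat b = flat b') (h : FixSlidesSpec b f)
    (h' : FixSlidesSpec b' f) {t : Fin n} (hlt : ∀ k < t, b k = b' k) (ht : b' t ≠ 0) :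
    b t = b' t := by
  obtain ⟨s, hts, hzero, hs⟩ := exists_eq_of_flat_eq hflat hlt ht
  rcases hts.eq_or_lt with rfl | hts
  · exact hs
  -- the entry `b' t` reappears in `b` at `s > t`; then `f` would reach the same partial sum at
  -- two nonzero positions `t < s`
  obtain ⟨hfs, hpss⟩ := h.2 s (hs ▸ ht)
  have hpst := (h'.2 t ht).2
  have e1 := psum_succ b s
  have e2 := psum_succ b' t
  have e3 := psum_eq_of_eq_zero b hts.le hzero
  have e4 := psum_congr hlt
  have e5 := psum_succ f s
  have e6 := psum_mono f (show (t : ℕ) + 1 ≤ s from hts)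
  omega

theorem FixSlidesSpec.eq_of_flat_eq (hflat : flat b = flat b') (h : FixSlidesSpec b f)
    (h' : FixSlidesSpec b' f) : b = b' := by
  funext t
  induction t using WellFoundedLT.induction with
  | _ t ih =>
  by_cases ht : b' t = 0
  · by_cases ht' : b t = 0
    · rw [ht, ht']
    · exact (h'.apply_eq_of_flat_eq hflat.symm h (fun k hk => (ih k hk).symm) ht').symm
  · exact h.apply_eq_of_flat_eq hflat h' ih ht

end FixSlidesSpec

section Expansion

variable {n : ℕ} {a b b' f : Fin n → ℕ}

theorem Slides.exists_fixSlidesSpec (h : Slides a f) :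
    ∃ b, Dom a b ∧ flat b = flat a ∧ FixSlidesSpec b f := by
  induction h with
  | refl => exact ⟨a, fun _ => le_rfl, rfl, .refl a⟩
  | @tail x _ _ hmove ih =>
    obtain ⟨b, hdom, hflat, hspec⟩ := ih
    obtain ⟨p, hp, i, j, hxP, hij, -, rfl⟩ := hmove
    have hbP := hspec.eq_zero_of_eq_zero hxP
    by_cases hwhole : j = 0 ∧ b ⟨p + 1, hp⟩ ≠ 0
    swap
    · refine ⟨b, hdom, hflat, (fixSlidesSpec_moveAt_iff hp hbP hxP hij fun hbQ => ?_).2 hspec⟩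
      have hj : j ≠ 0 := fun hj => hwhole ⟨hj, hbQ⟩
      exact iff_of_true hj (by omega)
    -- not a fixed move of `b`: the entry of `b` at `p + 1` has to slide along
    obtain ⟨rfl, -⟩ := hwhole
    rw [add_zero] at hij
    subst hij
    refine ⟨moveAt b hp (b ⟨p + 1, hp⟩) 0, fun m => ?_, (flat_moveAt hp hbP).trans hflat,
      hspec.moveAt_zero hp hxP⟩
    rw [psum_moveAt hp hbP (add_zero _)]
    exact (hdom m).trans (Nat.le_add_right _ _)

theorem exists_slideMove_of_dom (hdom : Dom a b) (hflat : flat a = flat b) (hne : a ≠ b) :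
    ∃ a', SlideMove a false a a' ∧ Dom a' b ∧ flat a' = flat b ∧ sumPsum a < sumPsum a' := by
  obtain ⟨t, hne_t, hmin⟩ := wellFounded_lt.has_min {t | a t ≠ b t} (Function.ne_iff.1 hne)
  have hlt : ∀ k < t, a k = b k := fun k hk => not_not.1 fun h => hmin k h hk
  have hpt := psum_congr hlt
  have hbt : b t ≠ 0 := by
    intro hbt
    have := hdom (t + 1)
    rw [psum_succ, psum_succ, hbt, hpt] at this
    exact hne_t (by omega)
  -- the entry `b t` sits in `a` at some `s > t`, with zeros in between: slide it to `s - 1`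
  obtain ⟨s, hts, hzero, hs⟩ := exists_eq_of_flat_eq hflat hlt hbt
  have hts' : t < s := lt_of_le_of_ne hts fun hst => hne_t (hst ▸ hs)
  obtain ⟨p, hp, rfl⟩ : ∃ (p : ℕ) (hp : p + 1 < n), s = ⟨p + 1, hp⟩ :=
    ⟨s - 1, by omega, Fin.ext (by simp; omega)⟩
  have haP : a ⟨p, Nat.lt_of_succ_lt hp⟩ = 0 :=
    hzero _ (Nat.lt_succ_iff.1 hts') (Nat.lt_succ_self p)
  refine ⟨moveAt a hp (a ⟨p + 1, hp⟩) 0, ⟨p, hp, _, 0, haP, rfl, nofun, rfl⟩, fun m => ?_,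
    (flat_moveAt hp haP).trans hflat, by rw [sumPsum_moveAt hp haP rfl]; omega⟩
  rw [psum_moveAt hp haP rfl]
  split_ifs with hm
  · subst hm
    have e1 := psum_eq_of_eq_zero a hts hzero
    have e2 := psum_succ b t
    have e3 := psum_mono b (show (t : ℕ) + 1 ≤ p + 1 from hts')
    dsimp only at e1
    omega
  · exact hdom m

theorem slides_of_dom (hdom : Dom a b) (hflat : flat a = flat b) : Slides a b := by
  induction hw : sumPsum b - sumPsum a using Nat.strong_induction_on generalizing a with
  | _ w ih =>
  by_cases hab : a = b
  · exact hab ▸ .refl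
  obtain ⟨a', hmove, hdom', hflat', hlt⟩ := exists_slideMove_of_dom hdom hflat hab
  have := sumPsum_le_of_dom hdom'
  exact Slides.head hmove (ih _ (by omega) hdom' hflat' rfl)

theorem slides_iff_exists_fixSlides :
    Slides a f ↔ ∃ b, Dom a b ∧ flat b = flat a ∧ FixSlides b f := by
  refine ⟨fun h => ?_, fun ⟨b, hdom, hflat, hfix⟩ =>
    (slides_of_dom hdom hflat.symm).trans hfix.slides⟩
  obtain ⟨b, hdom, hflat, hspec⟩ := h.exists_fixSlidesSpec
  exact ⟨b, hdom, hflat, hspec.fixSlides⟩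

theorem eq_of_fixSlides (hflat : flat b = flat b') (h : FixSlides b f) (h' : FixSlides b' f) :
    b = b' :=
  (fixSlides_iff_spec.1 h).eq_of_flat_eq hflat (fixSlides_iff_spec.1 h')

theorem mem_box_sum (g : Fin n → ℕ) : g ∈ box n (∑ i, g i) := by
  simp only [box, Fintype.mem_piFinset, Finset.mem_range, Nat.lt_succ_iff]
  exact fun i => Finset.single_le_sum (fun _ _ => Nat.zero_le _) (Finset.mem_univ i)

end Expansion

/-- `F_a = Σ_{b ≥ a, flat(b) = flat(a)} L_b`, and moreover every
slide `f` of `a` is a fixed slide of exactly one such `b`. -/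
theorem Fslide_eq_sum_Lpart {n : ℕ} (a : Fin n → ℕ) :
    (Fslide a =
      ∑ b ∈ (box n (∑ i, a i)).filter (fun b => Dom a b ∧ flat b = flat a), Lpart b) ∧
    (∀ f : Fin n → ℕ, Slides a f →
      ∃! b : Fin n → ℕ, Dom a b ∧ flat b = flat a ∧ FixSlides b f) := by
  set B := (box n (∑ i, a i)).filter (fun b => Dom a b ∧ flat b = flat a)
  have hsum : ∀ b, Dom a b → flat b = flat a → ∑ i, b i = ∑ i, a i :=
    fun b hdom hflat => (slides_of_dom hdom hflat.symm).sum_eq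
  have hB : ∀ b, b ∈ B ↔ Dom a b ∧ flat b = flat a := fun b => by
    simp only [B, Finset.mem_filter, and_iff_right_iff_imp]
    exact fun ⟨hdom, hflat⟩ => hsum b hdom hflat ▸ mem_box_sum b
  have hfibres : (box n (∑ i, a i)).filter (fun f => Slides a f)
      = B.biUnion fun b => (box n (∑ i, a i)).filter fun f => FixSlides b f := by
    ext f
    simp only [Finset.mem_filter, Finset.mem_biUnion, hB, slides_iff_exists_fixSlides]
    tauto
  have hdisj : (B : Set (Fin n → ℕ)).PairwiseDisjoint
      fun b => (box n (∑ i, a i)).filter fun f => FixSlides b f := by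
    intro b hb b' hb' hne
    refine Finset.disjoint_filter.2 fun f _ h h' => hne (eq_of_fixSlides ?_ h h')
    rw [((hB b).1 hb).2, ((hB b').1 hb').2]
  refine ⟨?_, fun f hf => ?_⟩
  · rw [Fslide, hfibres, Finset.sum_biUnion hdisj]
    refine Finset.sum_congr rfl fun b hb => ?_
    rw [Lpart, hsum b ((hB b).1 hb).1 ((hB b).1 hb).2]
  · obtain ⟨b, hdom, hflat, hfix⟩ := slides_iff_exists_fixSlides.1 hf
    exact ⟨b, ⟨hdom, hflat, hfix⟩, fun b' ⟨_, hflat', hfix'⟩ =>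
      eq_of_fixSlides (hflat'.trans hflat.symm) hfix' hfix⟩

end
end
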